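/- Let E be a complete normed real vector space, σ ∈ (0, 1], c > 0. Let u : [1, ∞) → E be differentiable with continuous derivative, and let f : [1, ∞) → ℝ be differentiable with f(t) < 0 for all t. Assume σ·|f(t)|^{σ−1}·f'(t) ≥ c·‖u'(t)‖ for all t ≥ 1. Then u(t) converges to a limit u_∞ ∈ E as t → ∞, and ‖u(t) − u(1)‖ ≤ |f(1)|^σ / c for all t ∈ [1, ∞), hence also ‖u_∞ − u(1)‖ ≤ |f(1)|^σ / c. -/
import Mathlib


open Filter

/-- **Abstract Łojasiewicz convergence lemma.**
Let `E` be a complete normed real vector space, `σ ∈ (0, 1]`, `c > 0`.  Let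
`u : [1, ∞) → E` be differentiable with continuous derivative `u'`, and let
`f : [1, ∞) → ℝ` be differentiable with `f(t) < 0`, satisfying
`σ·|f(t)|^(σ−1)·f'(t) ≥ c·‖u'(t)‖` for all `t ≥ 1`.  Then `u(t)` converges to a
limit `u_∞ ∈ E` as `t → ∞`, `‖u(t) − u(1)‖ ≤ |f(1)|^σ/c` for all `t ≥ 1`, and
`‖u_∞ − u(1)‖ ≤ |f(1)|^σ/c`. -/
theorem lojasiewicz_convergence
    {E : Type*} [NormedAddCommGroup E] [NormedSpace ℝ E] [CompleteSpace E]
    (σ c : ℝ) (hσ : σ ∈ Set.Ioc (0 : ℝ) 1) (hc : 0 < c)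
    (u : ℝ → E) (u' : ℝ → E) (f f' : ℝ → ℝ)
    (huderiv : ∀ t : ℝ, 1 ≤ t → HasDerivWithinAt u (u' t) (Set.Ici 1) t)
    (hucont : ContinuousOn u' (Set.Ici 1))
    (hfderiv : ∀ t : ℝ, 1 ≤ t → HasDerivWithinAt f (f' t) (Set.Ici 1) t)
    (hfneg : ∀ t : ℝ, 1 ≤ t → f t < 0)
    (hineq : ∀ t : ℝ, 1 ≤ t → c * ‖u' t‖ ≤ σ * |f t| ^ (σ - 1) * f' t) :
    ∃ u_inf : E, Tendsto u atTop (nhds u_inf) ∧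
      (∀ t : ℝ, 1 ≤ t → ‖u t - u 1‖ ≤ |f 1| ^ σ / c) ∧
      ‖u_inf - u 1‖ ≤ |f 1| ^ σ / c := by
  obtain ⟨hσ0, hσ1⟩ := hσ
  set φ : ℝ → ℝ := fun t => -(-f t) ^ σ with hφdef
  have habs : ∀ t : ℝ, 1 ≤ t → |f t| = -f t := fun t ht => abs_of_neg (hfneg t ht)
  -- derivative of φ
  have hφderiv : ∀ t : ℝ, 1 ≤ t →
      HasDerivWithinAt φ (σ * |f t| ^ (σ - 1) * f' t) (Set.Ici 1) t := by
    intro t ht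
    have hft : f t < 0 := hfneg t ht
    have h1 : HasDerivWithinAt (fun s => -f s) (-f' t) (Set.Ici 1) t := (hfderiv t ht).neg
    have h2 : HasDerivAt (fun x : ℝ => x ^ σ) (σ * (-f t) ^ (σ - 1)) (-f t) :=
      Real.hasDerivAt_rpow_const (Or.inl (by linarith))
    have h4 := (h2.comp_hasDerivWithinAt t h1).neg
    have : -(σ * (-f t) ^ (σ - 1) * -f' t) = σ * |f t| ^ (σ - 1) * f' t := by
      rw [habs t ht]; ring
    rw [this] at h4
    exact h4
  have hφcont : ContinuousOn φ (Set.Ici 1) :=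
    fun t ht => (hφderiv t ht).continuousWithinAt
  have hucont' : ContinuousOn u (Set.Ici 1) :=
    fun t ht => (huderiv t ht).continuousWithinAt
  have hφnonpos : ∀ t : ℝ, 1 ≤ t → φ t ≤ 0 := by
    intro t ht
    simp only [hφdef, neg_nonpos]
    exact Real.rpow_nonneg (by linarith [hfneg t ht]) σ
  have hφ1 : φ 1 = -|f 1| ^ σ := by simp only [hφdef]; rw [habs 1 le_rfl]
  -- monotonicity of φ
  have hφmono : MonotoneOn φ (Set.Ici (1:ℝ)) := by
    apply monotoneOn_of_hasDerivWithinAt_nonneg (convex_Ici 1)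
      (f' := fun t => σ * |f t| ^ (σ - 1) * f' t) hφcont
    · intro x hx
      rw [interior_Ici] at hx ⊢
      exact (hφderiv x (le_of_lt hx)).mono Set.Ioi_subset_Ici_self
    · intro x hx
      rw [interior_Ici] at hx
      exact le_trans (by positivity) (hineq x (le_of_lt hx))
  -- segment estimate: ‖u t - u s‖ ≤ (φ t - φ s)/c
  have hseg : ∀ s t : ℝ, 1 ≤ s → s ≤ t → ‖u t - u s‖ ≤ (φ t - φ s) / c := by
    intro s t hs hst
    have hsub : Set.Icc s t ⊆ Set.Ici (1:ℝ) := fun y hy => le_trans hs hy.1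
    have key := image_norm_le_of_norm_deriv_right_le_deriv_boundary'
      (f := fun x => u x - u s) (f' := u')
      (a := s) (b := t)
      (B := fun x => (φ x - φ s) / c)
      (B' := fun x => σ * |f x| ^ (σ - 1) * f' x / c)
      ((hucont'.mono hsub).sub continuousOn_const)
      (fun x hx => ((huderiv x (le_trans hs hx.1)).mono
        (fun y (hy : x ≤ y) => le_trans (le_trans hs hx.1) hy)).sub_const (u s))
      (by simp)
      (((hφcont.mono hsub).sub continuousOn_const).div_const c)
      (fun x hx => (((hφderiv x (le_trans hs hx.1)).mono
        (fun y (hy : x ≤ y) => le_trans (le_trans hs hx.1) hy)).sub_const (φ s)).div_const c)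
      (fun x hx => by
        rw [le_div_iff₀ hc, mul_comm]
        exact hineq x (le_trans hs hx.1))
    exact key (Set.right_mem_Icc.mpr hst)
  have hbound : ∀ t : ℝ, 1 ≤ t → ‖u t - u 1‖ ≤ |f 1| ^ σ / c := by
    intro t ht
    calc ‖u t - u 1‖ ≤ (φ t - φ 1) / c := hseg 1 t le_rfl ht
      _ ≤ |f 1| ^ σ / c := by
          apply div_le_div_of_nonneg_right _ hc.le
          have := hφnonpos t ht
          rw [hφ1]; linarith
  -- φ converges to its sup
  set Φ : ℝ → ℝ := fun t => φ (max t 1) with hΦdef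
  have hΦmono : Monotone Φ := fun a b hab =>
    hφmono (Set.mem_Ici.mpr (le_max_right a 1)) (Set.mem_Ici.mpr (le_max_right b 1))
      (max_le_max hab le_rfl)
  have hΦbdd : BddAbove (Set.range Φ) := by
    refine ⟨0, ?_⟩
    rintro x ⟨t, rfl⟩
    exact hφnonpos _ (le_max_right t 1)
  set L : ℝ := ⨆ t, Φ t with hLdef
  have hΦtendsto : Tendsto Φ atTop (nhds L) := tendsto_atTop_ciSup hΦmono hΦbdd
  have hΦleL : ∀ t : ℝ, Φ t ≤ L := fun t => le_ciSup hΦbdd t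
  -- Cauchy property
  have hcauchy : Cauchy (map u atTop) := by
    rw [Metric.cauchy_iff]
    constructor
    · exact map_neBot
    intro ε hε
    have : ∀ᶠ T in atTop, L - Φ T < c * ε / 2 := by
      have := hΦtendsto.eventually (eventually_gt_nhds (show L - c * ε / 2 < L from sub_lt_self L (by positivity)))
      filter_upwards [this] with T hT
      linarith
    obtain ⟨T, hT, hT1⟩ := (this.and (eventually_ge_atTop (1:ℝ))).exists
    refine ⟨u '' Set.Ici T, image_mem_map (Ici_mem_atTop T), ?_⟩
    rintro x ⟨a, (ha : T ≤ a), rfl⟩ y ⟨b, (hb : T ≤ b), rfl⟩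
    have key : ∀ p q : ℝ, T ≤ p → p ≤ q → dist (u q) (u p) < ε := by
      intro p q hp hpq
      have hp1 : 1 ≤ p := le_trans hT1 hp
      have hq1 : 1 ≤ q := le_trans hp1 hpq
      have h1 : dist (u q) (u p) ≤ (φ q - φ p) / c := by
        rw [dist_eq_norm]
        exact hseg p q hp1 hpq
      have hφq : φ q ≤ L := by
        simpa only [hΦdef, max_eq_left hq1] using hΦleL q
      have hφp : φ T ≤ φ p :=
        hφmono (Set.mem_Ici.mpr hT1) (Set.mem_Ici.mpr hp1) hp
      have hT' : L - φ T < c * ε / 2 := by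
        simpa only [hΦdef, max_eq_left hT1] using hT
      have : (φ q - φ p) / c < ε := by
        rw [div_lt_iff₀ hc, mul_comm]
        have hcε : (0:ℝ) < c * ε := mul_pos hc hε
        calc φ q - φ p ≤ L - φ T := sub_le_sub hφq hφp
          _ < c * ε / 2 := hT'
          _ ≤ c * ε := half_le_self hcε.le
      linarith
    rcases le_total a b with h | h
    · rw [dist_comm]; exact key a b ha h
    · exact key b a hb h
  obtain ⟨u_inf, hlim⟩ := CompleteSpace.complete hcauchy
  have htendsto : Tendsto u atTop (nhds u_inf) := hlim
  refine ⟨u_inf, htendsto, hbound, ?_⟩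
  apply le_of_tendsto ((htendsto.sub_const (u 1)).norm)
  filter_upwards [eventually_ge_atTop (1:ℝ)] with t ht
  exact hbound t ht
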